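/- Let G be a group and n ≥ 1. Let (F_*, ∂_*) and (P_*, δ_*) be two FP_{n+1}-resolutions of ℤ over ℤ[G], with filling norms ‖·‖_{F_n}, ‖·‖_{F_{n+1}}, ‖·‖_{P_n}, ‖·‖_{P_{n+1}} chosen on the degree-n and degree-(n+1) modules. Suppose f_* : F_* → P_* and g_* : P_* → F_* are chain maps of ℤ[G]-module complexes commuting with the augmentations to ℤ, and h_i : F_i → F_{i+1} (for 0 ≤ i ≤ n, with h_{-1} = 0) are ℤ[G]-module maps satisfying ∂_{i+1} ∘ h_i + h_{i-1} ∘ ∂_i = g_i ∘ f_i − id on F_i. Then there exists a constant C > 0 such that for every α ∈ ker ∂_n (note that then f_n(α) ∈ ker δ_n), one has ‖α‖_{∂_{n+1}} ≤ C·‖f_n(α)‖_{δ_{n+1}} + C·‖α‖_{F_n}. -/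

import Mathlib

/-!
Choose `μ` with `δ μ = f α` and `‖μ‖ = ‖f α‖_δ`. Since `α` is a cycle, the homotopy identity gives
`∂ (h α) = g (f α) - α`, and `∂ g = g δ` gives `∂ (g μ) = g (f α)`; hence `g μ - h α` fills `α`.
Every `ℤ[G]`-linear map between modules with filling norms is Lipschitz (bound it on the images of
the basis vectors and use `‖z • x‖₁ ≤ ‖z‖₁ ‖x‖₁`), so `‖g μ - h α‖ ≤ C ‖μ‖ + C ‖α‖`.
-/

/-- The ℓ1-norm on the based finitely generated free `ℤ[G]`-module `Fin r →₀ ℤ[G]`. -/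
noncomputable def l1 {G : Type*} [Group G] {r : ℕ}
    (x : Fin r →₀ MonoidAlgebra ℤ G) : ℕ :=
  x.sum fun _ a => Finsupp.sum a.coeff fun _ z => z.natAbs

/-- The filling norm on `M` induced by a surjection `η` from a based finitely
generated free `ℤ[G]`-module: `‖m‖_η = min { ‖x‖₁ : η x = m }`. -/
noncomputable def fillNorm {G : Type*} [Group G] {r : ℕ}
    {M : Type*} [AddCommGroup M] [Module (MonoidAlgebra ℤ G) M]
    (η : (Fin r →₀ MonoidAlgebra ℤ G) →ₗ[MonoidAlgebra ℤ G] M) (m : M) : ℕ :=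
  sInf {n : ℕ | ∃ x, η x = m ∧ l1 x = n}

/-- Given a boundary map `d : A → B` (playing the role of `∂_{n+1}`) and a filling
norm on `A` induced by `η`, the filling norm `‖γ‖_{∂_{n+1}} = min {‖μ‖_A : d μ = γ}`
of a cycle `γ`. -/
noncomputable def bdryNorm {G : Type*} [Group G]
    {A B : Type*} [AddCommGroup A] [Module (MonoidAlgebra ℤ G) A]
    [AddCommGroup B] [Module (MonoidAlgebra ℤ G) B] {r : ℕ}
    (d : A →ₗ[MonoidAlgebra ℤ G] B)
    (η : (Fin r →₀ MonoidAlgebra ℤ G) →ₗ[MonoidAlgebra ℤ G] A) (γ : B) : ℕ :=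
  sInf {c : ℕ | ∃ μ, d μ = γ ∧ fillNorm η μ = c}

/-- `ℤ` with the trivial `G`-action, as a `ℤ[G]`-module via the augmentation map. -/
def TrivialZ (G : Type*) [Group G] : Type := ℤ

noncomputable instance (G : Type*) [Group G] : AddCommGroup (TrivialZ G) :=
  inferInstanceAs (AddCommGroup ℤ)

noncomputable instance (G : Type*) [Group G] : Module (MonoidAlgebra ℤ G) (TrivialZ G) :=
  Module.compHom ℤ ((MonoidAlgebra.lift ℤ ℤ G) 1).toRingHom

open Finset

namespace Finsupp

noncomputable def natAbsSum {ι : Type*} (a : ι →₀ ℤ) : ℕ := a.sum fun _ z => z.natAbs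

variable {ι : Type*}

lemma natAbsSum_eq_sum_of_support_subset (a : ι →₀ ℤ) {s : Finset ι} (hs : a.support ⊆ s) :
    a.natAbsSum = ∑ i ∈ s, (a i).natAbs :=
  a.sum_of_support_subset hs _ fun _ _ => rfl

lemma natAbsSum_zero : (0 : ι →₀ ℤ).natAbsSum = 0 := sum_zero_index

lemma natAbsSum_add_le (a b : ι →₀ ℤ) : (a + b).natAbsSum ≤ a.natAbsSum + b.natAbsSum := by
  classical
  rw [natAbsSum_eq_sum_of_support_subset _ support_add,
    natAbsSum_eq_sum_of_support_subset a subset_union_left,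
    natAbsSum_eq_sum_of_support_subset b subset_union_right, ← sum_add_distrib]
  refine Finset.sum_le_sum fun i _ => ?_
  rw [add_apply]
  exact Int.natAbs_add_le (a i) (b i)

lemma natAbsSum_single_le (i : ι) (z : ℤ) : (single i z).natAbsSum ≤ z.natAbs :=
  (sum_single_index rfl).le

lemma natAbsSum_sum_le {κ : Type*} (s : Finset κ) (a : κ → ι →₀ ℤ) :
    (∑ k ∈ s, a k).natAbsSum ≤ ∑ k ∈ s, (a k).natAbsSum :=
  le_sum_of_subadditive natAbsSum natAbsSum_zero.le natAbsSum_add_le s a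

end Finsupp

lemma MonoidAlgebra.natAbsSum_coeff_mul_le {M : Type*} [Monoid M] (x y : MonoidAlgebra ℤ M) :
    (x * y).coeff.natAbsSum ≤ x.coeff.natAbsSum * y.coeff.natAbsSum := by
  have hxy : (x * y).coeff = ∑ g ∈ x.coeff.support, ∑ h ∈ y.coeff.support,
      Finsupp.single (g * h) (x.coeff g * y.coeff h) := by
    rw [mul_def]
    simp [Finsupp.sum, coeff_sum, coeff_single]
  calc (x * y).coeff.natAbsSum
      ≤ ∑ g ∈ x.coeff.support, ∑ h ∈ y.coeff.support,
          (Finsupp.single (g * h) (x.coeff g * y.coeff h)).natAbsSum := by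
        rw [hxy]
        exact (Finsupp.natAbsSum_sum_le _ _).trans
          (sum_le_sum fun g _ => Finsupp.natAbsSum_sum_le _ _)
    _ ≤ ∑ g ∈ x.coeff.support, ∑ h ∈ y.coeff.support, (x.coeff g).natAbs * (y.coeff h).natAbs :=
        sum_le_sum fun g _ => sum_le_sum fun h _ =>
          (Finsupp.natAbsSum_single_le _ _).trans (Int.natAbs_mul _ _).le
    _ = x.coeff.natAbsSum * y.coeff.natAbsSum := by
        rw [x.coeff.natAbsSum_eq_sum_of_support_subset subset_rfl,
          y.coeff.natAbsSum_eq_sum_of_support_subset subset_rfl, sum_mul_sum]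

section FillingNorm

variable {G : Type*} [Group G] {r : ℕ}

lemma l1_eq_sum (x : Fin r →₀ MonoidAlgebra ℤ G) : l1 x = ∑ i, (x i).coeff.natAbsSum :=
  x.sum_of_support_subset (subset_univ _) _ fun _ _ => rfl

lemma l1_zero : l1 (0 : Fin r →₀ MonoidAlgebra ℤ G) = 0 := Finsupp.sum_zero_index

lemma l1_add_le (x y : Fin r →₀ MonoidAlgebra ℤ G) : l1 (x + y) ≤ l1 x + l1 y := by
  simp only [l1_eq_sum, ← sum_add_distrib]
  exact sum_le_sum fun i _ => Finsupp.natAbsSum_add_le _ _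

lemma l1_smul_le (z : MonoidAlgebra ℤ G) (x : Fin r →₀ MonoidAlgebra ℤ G) :
    l1 (z • x) ≤ z.coeff.natAbsSum * l1 x := by
  simp only [l1_eq_sum, Finset.mul_sum]
  exact sum_le_sum fun i _ => MonoidAlgebra.natAbsSum_coeff_mul_le z (x i)

variable {M : Type*} [AddCommGroup M] [Module (MonoidAlgebra ℤ G) M]
  {η : (Fin r →₀ MonoidAlgebra ℤ G) →ₗ[MonoidAlgebra ℤ G] M}

lemma fillNorm_le_l1 {x : Fin r →₀ MonoidAlgebra ℤ G} {a : M} (hx : η x = a) :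
    fillNorm η a ≤ l1 x :=
  Nat.sInf_le ⟨x, hx, rfl⟩

lemma exists_l1_eq_fillNorm (hη : Function.Surjective η) (a : M) :
    ∃ x, η x = a ∧ l1 x = fillNorm η a := by
  obtain ⟨x, hx⟩ := hη a
  exact Nat.sInf_mem (s := {n | ∃ x, η x = a ∧ l1 x = n}) ⟨l1 x, x, hx, rfl⟩

lemma fillNorm_zero : fillNorm η 0 = 0 :=
  Nat.eq_zero_of_le_zero <| (fillNorm_le_l1 (map_zero η)).trans_eq l1_zero

lemma fillNorm_add_le (hη : Function.Surjective η) (a b : M) :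
    fillNorm η (a + b) ≤ fillNorm η a + fillNorm η b := by
  obtain ⟨x, rfl, hx⟩ := exists_l1_eq_fillNorm hη a
  obtain ⟨y, rfl, hy⟩ := exists_l1_eq_fillNorm hη b
  calc fillNorm η (η x + η y) ≤ l1 (x + y) := fillNorm_le_l1 (map_add η x y)
    _ ≤ l1 x + l1 y := l1_add_le x y
    _ = _ := by rw [hx, hy]

lemma fillNorm_smul_le (hη : Function.Surjective η) (z : MonoidAlgebra ℤ G) (a : M) :
    fillNorm η (z • a) ≤ z.coeff.natAbsSum * fillNorm η a := by
  obtain ⟨x, rfl, hx⟩ := exists_l1_eq_fillNorm hη a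
  calc fillNorm η (z • η x) ≤ l1 (z • x) := fillNorm_le_l1 (map_smul η z x)
    _ ≤ z.coeff.natAbsSum * l1 x := l1_smul_le z x
    _ = _ := by rw [hx]

lemma fillNorm_sum_le (hη : Function.Surjective η) {κ : Type*} (s : Finset κ) (a : κ → M) :
    fillNorm η (∑ k ∈ s, a k) ≤ ∑ k ∈ s, fillNorm η (a k) :=
  le_sum_of_subadditive (fillNorm η) fillNorm_zero.le (fillNorm_add_le hη) s a

lemma exists_fillNorm_map_le {s : ℕ} {N : Type*} [AddCommGroup N] [Module (MonoidAlgebra ℤ G) N]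
    {θ : (Fin s →₀ MonoidAlgebra ℤ G) →ₗ[MonoidAlgebra ℤ G] N}
    (hη : Function.Surjective η) (hθ : Function.Surjective θ) (T : M →ₗ[MonoidAlgebra ℤ G] N) :
    ∃ C : ℕ, ∀ a, fillNorm θ (T a) ≤ C * fillNorm η a := by
  obtain ⟨C, hC⟩ := Finite.exists_le fun i => fillNorm θ (T (η (Finsupp.single i 1)))
  refine ⟨C, fun a => ?_⟩
  obtain ⟨x, rfl, hx⟩ := exists_l1_eq_fillNorm hη a
  have hTx : T (η x) = ∑ i, x i • T (η (Finsupp.single i 1)) := by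
    conv_lhs => rw [← Finsupp.univ_sum_single x]
    simp only [map_sum, ← map_smul, Finsupp.smul_single, smul_eq_mul, mul_one]
  calc fillNorm θ (T (η x))
      ≤ ∑ i, (x i).coeff.natAbsSum * fillNorm θ (T (η (Finsupp.single i 1))) := by
        rw [hTx]
        exact (fillNorm_sum_le hθ _ _).trans (sum_le_sum fun i _ => fillNorm_smul_le hθ _ _)
    _ ≤ ∑ i, (x i).coeff.natAbsSum * C :=
        sum_le_sum fun i _ => Nat.mul_le_mul_left _ (hC i)
    _ = C * fillNorm η (η x) := by rw [← sum_mul, ← l1_eq_sum, hx, mul_comm]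

end FillingNorm

section BoundaryNorm

variable {G : Type*} [Group G] {A B : Type*} [AddCommGroup A] [Module (MonoidAlgebra ℤ G) A]
  [AddCommGroup B] [Module (MonoidAlgebra ℤ G) B] {r : ℕ}
  {d : A →ₗ[MonoidAlgebra ℤ G] B} {η : (Fin r →₀ MonoidAlgebra ℤ G) →ₗ[MonoidAlgebra ℤ G] A}

lemma bdryNorm_le_fillNorm {μ : A} {γ : B} (hμ : d μ = γ) : bdryNorm d η γ ≤ fillNorm η μ :=
  Nat.sInf_le ⟨μ, hμ, rfl⟩

lemma exists_fillNorm_eq_bdryNorm {γ : B} (hγ : γ ∈ LinearMap.range d) :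
    ∃ μ, d μ = γ ∧ fillNorm η μ = bdryNorm d η γ := by
  obtain ⟨μ, hμ⟩ := hγ
  exact Nat.sInf_mem (s := {c | ∃ μ, d μ = γ ∧ fillNorm η μ = c}) ⟨_, μ, hμ, rfl⟩

end BoundaryNorm

theorem filling_norm_comparison_of_chain_homotopy_general
    (G : Type*) [Group G] (m : ℕ)
    (F P : ℕ → Type*)
    [∀ i, AddCommGroup (F i)] [∀ i, Module (MonoidAlgebra ℤ G) (F i)]
    [∀ i, AddCommGroup (P i)] [∀ i, Module (MonoidAlgebra ℤ G) (P i)]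
    (dF : ∀ i, F (i + 1) →ₗ[MonoidAlgebra ℤ G] F i)
    (dP : ∀ i, P (i + 1) →ₗ[MonoidAlgebra ℤ G] P i)
    -- exactness of (P_*, δ_*) at ℤ and at P_0, …, P_n
    (hPex : ∀ i, i + 1 ≤ m + 1 →
      LinearMap.range (dP (i + 1)) = LinearMap.ker (dP i))
    -- chosen filling norms on the degree-n and degree-(n+1) modules
    (rFn rFn1 rPn1 : ℕ)
    (ηFn : (Fin rFn →₀ MonoidAlgebra ℤ G) →ₗ[MonoidAlgebra ℤ G] F (m + 1))
    (hηFn : Function.Surjective ηFn)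
    (ηFn1 : (Fin rFn1 →₀ MonoidAlgebra ℤ G) →ₗ[MonoidAlgebra ℤ G] F (m + 2))
    (hηFn1 : Function.Surjective ηFn1)
    (ηPn1 : (Fin rPn1 →₀ MonoidAlgebra ℤ G) →ₗ[MonoidAlgebra ℤ G] P (m + 2))
    (hηPn1 : Function.Surjective ηPn1)
    -- chain maps f : F_* → P_* and g : P_* → F_* commuting with the augmentations
    (f : ∀ i, F i →ₗ[MonoidAlgebra ℤ G] P i)
    (g : ∀ i, P i →ₗ[MonoidAlgebra ℤ G] F i)
    (hf : ∀ i ≤ m + 1, (dP i).comp (f (i + 1)) = (f i).comp (dF i))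
    (hg : ∀ i ≤ m + 1, (dF i).comp (g (i + 1)) = (g i).comp (dP i))
    -- chain homotopy h_i : F_i → F_{i+1}, 0 ≤ i ≤ n, with h_{-1} = 0:
    -- ∂_{i+1} ∘ h_i + h_{i-1} ∘ ∂_i = g_i ∘ f_i - id
    (h : ∀ i, F i →ₗ[MonoidAlgebra ℤ G] F (i + 1))
    (hh : ∀ i, i + 1 ≤ m + 1 →
      (dF (i + 1)).comp (h (i + 1)) + (h i).comp (dF i)
        = (g (i + 1)).comp (f (i + 1)) - LinearMap.id) :
    -- conclusion: ‖α‖_{∂_{n+1}} ≤ C ⬝ ‖f_n(α)‖_{δ_{n+1}} + C ⬝ ‖α‖_{F_n}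
    ∃ C : ℕ, 0 < C ∧ ∀ α ∈ LinearMap.ker (dF m),
      bdryNorm (dF (m + 1)) ηFn1 α
        ≤ C * bdryNorm (dP (m + 1)) ηPn1 (f (m + 1) α) + C * fillNorm ηFn α := by
  obtain ⟨C₁, hg_le⟩ := exists_fillNorm_map_le hηPn1 hηFn1 (g (m + 2))
  obtain ⟨C₂, hh_le⟩ := exists_fillNorm_map_le hηFn hηFn1 (-h (m + 1))
  refine ⟨C₁ + C₂ + 1, Nat.succ_pos _, fun α hα => ?_⟩
  have hα0 : dF m α = 0 := hα
  have hfα : f (m + 1) α ∈ LinearMap.range (dP (m + 1)) := by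
    rw [hPex m le_rfl, LinearMap.mem_ker, ← LinearMap.comp_apply, hf m m.le_succ,
      LinearMap.comp_apply, hα0, map_zero]
  obtain ⟨μ, hμ, hμ_norm⟩ := exists_fillNorm_eq_bdryNorm (η := ηPn1) hfα
  have hfill : dF (m + 1) (g (m + 2) μ + (-h (m + 1)) α) = α := by
    have hgμ := LinearMap.congr_fun (hg (m + 1) le_rfl) μ
    have hhα := LinearMap.congr_fun (hh m le_rfl) α
    simp only [LinearMap.comp_apply, LinearMap.add_apply, LinearMap.sub_apply,
      LinearMap.id_apply, hα0, map_zero, add_zero] at hgμ hhα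
    rw [map_add, LinearMap.neg_apply, map_neg, hgμ, hμ, hhα, neg_sub, add_sub_cancel]
  calc bdryNorm (dF (m + 1)) ηFn1 α
      ≤ fillNorm ηFn1 (g (m + 2) μ + (-h (m + 1)) α) := bdryNorm_le_fillNorm hfill
    _ ≤ C₁ * fillNorm ηPn1 μ + C₂ * fillNorm ηFn α :=
        (fillNorm_add_le hηFn1 _ _).trans (add_le_add (hg_le μ) (hh_le α))
    _ ≤ _ := by rw [hμ_norm]; gcongr <;> omega

/-- Key comparison lemma for the well-definedness of the homological filling function.
Here `n = m + 1 ≥ 1`; `dF i : F (i+1) → F i` is the differential `∂_{i+1}` of the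
`FP_{n+1}`-resolution `(F_*, ∂_*)` of `ℤ` over `ℤ[G]`, and similarly `dP` is the
differential `δ_*` of `(P_*, δ_*)`; `f_*, g_*` are chain maps and `h_*` a partial
chain homotopy witnessing `∂_{i+1} ∘ h_i + h_{i-1} ∘ ∂_i = g_i ∘ f_i - id` for
`0 ≤ i ≤ n` (with `h_{-1} = 0`). -/
theorem filling_norm_comparison_of_chain_homotopy
    (G : Type*) [Group G] (m : ℕ)
    (F P : ℕ → Type*)
    [∀ i, AddCommGroup (F i)] [∀ i, Module (MonoidAlgebra ℤ G) (F i)]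
    [∀ i, AddCommGroup (P i)] [∀ i, Module (MonoidAlgebra ℤ G) (P i)]
    (dF : ∀ i, F (i + 1) →ₗ[MonoidAlgebra ℤ G] F i)
    (dP : ∀ i, P (i + 1) →ₗ[MonoidAlgebra ℤ G] P i)
    (εF : F 0 →ₗ[MonoidAlgebra ℤ G] TrivialZ G)
    (εP : P 0 →ₗ[MonoidAlgebra ℤ G] TrivialZ G)
    -- each module in degrees 0, …, n+1 = m+2 is finitely generated projective
    (hFproj : ∀ i ≤ m + 2, Module.Projective (MonoidAlgebra ℤ G) (F i))
    (hFfin : ∀ i ≤ m + 2, Module.Finite (MonoidAlgebra ℤ G) (F i))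
    (hPproj : ∀ i ≤ m + 2, Module.Projective (MonoidAlgebra ℤ G) (P i))
    (hPfin : ∀ i ≤ m + 2, Module.Finite (MonoidAlgebra ℤ G) (P i))
    -- exactness of (F_*, ∂_*) at ℤ and at F_0, …, F_n
    (hεF : Function.Surjective εF)
    (hF0 : LinearMap.range (dF 0) = LinearMap.ker εF)
    (hFex : ∀ i, i + 1 ≤ m + 1 →
      LinearMap.range (dF (i + 1)) = LinearMap.ker (dF i))
    -- exactness of (P_*, δ_*) at ℤ and at P_0, …, P_n
    (hεP : Function.Surjective εP)
    (hP0 : LinearMap.range (dP 0) = LinearMap.ker εP)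
    (hPex : ∀ i, i + 1 ≤ m + 1 →
      LinearMap.range (dP (i + 1)) = LinearMap.ker (dP i))
    -- chosen filling norms on the degree-n and degree-(n+1) modules
    (rFn rFn1 rPn rPn1 : ℕ)
    (ηFn : (Fin rFn →₀ MonoidAlgebra ℤ G) →ₗ[MonoidAlgebra ℤ G] F (m + 1))
    (hηFn : Function.Surjective ηFn)
    (ηFn1 : (Fin rFn1 →₀ MonoidAlgebra ℤ G) →ₗ[MonoidAlgebra ℤ G] F (m + 2))
    (hηFn1 : Function.Surjective ηFn1)
    (ηPn : (Fin rPn →₀ MonoidAlgebra ℤ G) →ₗ[MonoidAlgebra ℤ G] P (m + 1))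
    (hηPn : Function.Surjective ηPn)
    (ηPn1 : (Fin rPn1 →₀ MonoidAlgebra ℤ G) →ₗ[MonoidAlgebra ℤ G] P (m + 2))
    (hηPn1 : Function.Surjective ηPn1)
    -- chain maps f : F_* → P_* and g : P_* → F_* commuting with the augmentations
    (f : ∀ i, F i →ₗ[MonoidAlgebra ℤ G] P i)
    (g : ∀ i, P i →ₗ[MonoidAlgebra ℤ G] F i)
    (hf : ∀ i ≤ m + 1, (dP i).comp (f (i + 1)) = (f i).comp (dF i))
    (hfε : εP.comp (f 0) = εF)
    (hg : ∀ i ≤ m + 1, (dF i).comp (g (i + 1)) = (g i).comp (dP i))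
    (hgε : εF.comp (g 0) = εP)
    -- chain homotopy h_i : F_i → F_{i+1}, 0 ≤ i ≤ n, with h_{-1} = 0:
    -- ∂_{i+1} ∘ h_i + h_{i-1} ∘ ∂_i = g_i ∘ f_i - id
    (h : ∀ i, F i →ₗ[MonoidAlgebra ℤ G] F (i + 1))
    (hh0 : (dF 0).comp (h 0) = (g 0).comp (f 0) - LinearMap.id)
    (hh : ∀ i, i + 1 ≤ m + 1 →
      (dF (i + 1)).comp (h (i + 1)) + (h i).comp (dF i)
        = (g (i + 1)).comp (f (i + 1)) - LinearMap.id) :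
    -- conclusion: ‖α‖_{∂_{n+1}} ≤ C ⬝ ‖f_n(α)‖_{δ_{n+1}} + C ⬝ ‖α‖_{F_n}
    ∃ C : ℕ, 0 < C ∧ ∀ α ∈ LinearMap.ker (dF m),
      bdryNorm (dF (m + 1)) ηFn1 α
        ≤ C * bdryNorm (dP (m + 1)) ηPn1 (f (m + 1) α) + C * fillNorm ηFn α :=
  filling_norm_comparison_of_chain_homotopy_general G m F P dF dP hPex rFn rFn1 rPn1 ηFn hηFn ηFn1
    hηFn1 ηPn1 hηPn1 f g hf hg h hh
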